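/- U is a subgroup of GL₃(ℤ_p), and it admits an Iwahori decomposition with respect to P₁: every g ∈ U can be written uniquely as g = n̄·m·n where n̄ = [[1,0,0],[x,1,0],[y,0,1]] with x ∈ pℤ_p and y ∈ p^Rℤ_p; m = [[α,0,0],[0,γ₁₁,γ₁₂],[0,γ₂₁,γ₂₂]] with α ∈ ℤ_p^× and γ ∈ GL₂(ℤ_p) satisfying γ₂₁ ∈ p^rℤ_p and γ₂₂ ∈ 1 + p^rℤ_p; and n = [[1,b,c],[0,1,0],[0,0,1]] with b, c ∈ ℤ_p. In particular U = (U ∩ N̄(ℚ_p))·(U ∩ M(ℚ_p))·(U ∩ N(ℚ_p)), and the intersection of U with the GL₂-factor of the Levi M is the level-p^r mirabolic subgroup {γ ∈ GL₂(ℤ_p) : γ₂₁ ∈ p^rℤ_p, γ₂₂ ∈ 1 + p^rℤ_p}. -/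
import Mathlib


/-- The parahoric-type level group `U = U^{(P₁)}_{1,p}(p^r) ⊆ GL₃(ℤ_p)`: all `g ∈ GL₃(ℤ_p)`
with `g₂₁ ∈ pℤ_p`, `g₃₁ ∈ p^Rℤ_p`, `g₃₂ ∈ p^rℤ_p` and `g₃₃ ∈ 1 + p^rℤ_p`, where `R = max(r,1)`. -/
def Ulevel (p : ℕ) [Fact p.Prime] (r : ℕ) : Set ((Matrix (Fin 3) (Fin 3) ℤ_[p])ˣ) :=
  {g | (p : ℤ_[p]) ∣ (g : Matrix (Fin 3) (Fin 3) ℤ_[p]) 1 0 ∧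
       (p : ℤ_[p]) ^ (max r 1) ∣ (g : Matrix (Fin 3) (Fin 3) ℤ_[p]) 2 0 ∧
       (p : ℤ_[p]) ^ r ∣ (g : Matrix (Fin 3) (Fin 3) ℤ_[p]) 2 1 ∧
       (p : ℤ_[p]) ^ r ∣ ((g : Matrix (Fin 3) (Fin 3) ℤ_[p]) 2 2 - 1)}

/-- Shape of elements of `U ∩ N̄(ℚ_p)`: lower unipotent matrices `[[1,0,0],[x,1,0],[y,0,1]]`. -/
def lowerShape (p : ℕ) [Fact p.Prime] (h : Matrix (Fin 3) (Fin 3) ℤ_[p]) : Prop :=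
  h 0 0 = 1 ∧ h 0 1 = 0 ∧ h 0 2 = 0 ∧ h 1 1 = 1 ∧ h 1 2 = 0 ∧ h 2 1 = 0 ∧ h 2 2 = 1

/-- Shape of elements of `U ∩ M(ℚ_p)`: block matrices `[[α,0,0],[0,γ₁₁,γ₁₂],[0,γ₂₁,γ₂₂]]`. -/
def leviShape (p : ℕ) [Fact p.Prime] (h : Matrix (Fin 3) (Fin 3) ℤ_[p]) : Prop :=
  h 0 1 = 0 ∧ h 0 2 = 0 ∧ h 1 0 = 0 ∧ h 2 0 = 0

/-- Shape of elements of `U ∩ N(ℚ_p)`: upper unipotent matrices `[[1,b,c],[0,1,0],[0,0,1]]`. -/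
def upperShape (p : ℕ) [Fact p.Prime] (h : Matrix (Fin 3) (Fin 3) ℤ_[p]) : Prop :=
  h 0 0 = 1 ∧ h 1 0 = 0 ∧ h 1 1 = 1 ∧ h 1 2 = 0 ∧ h 2 0 = 0 ∧ h 2 1 = 0 ∧ h 2 2 = 1

namespace IwAux

variable {p : ℕ} [Fact p.Prime] {r : ℕ}

lemma mul_entry (g h : (Matrix (Fin 3) (Fin 3) ℤ_[p])ˣ) (i j : Fin 3) :
    ((g*h : (Matrix (Fin 3) (Fin 3) ℤ_[p])ˣ) : Matrix (Fin 3) (Fin 3) ℤ_[p]) i j =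
      (g : Matrix (Fin 3) (Fin 3) ℤ_[p]) i 0 * (h : Matrix (Fin 3) (Fin 3) ℤ_[p]) 0 j +
      (g : Matrix (Fin 3) (Fin 3) ℤ_[p]) i 1 * (h : Matrix (Fin 3) (Fin 3) ℤ_[p]) 1 j +
      (g : Matrix (Fin 3) (Fin 3) ℤ_[p]) i 2 * (h : Matrix (Fin 3) (Fin 3) ℤ_[p]) 2 j := by
  simp [Units.val_mul, Matrix.mul_apply, Fin.sum_univ_three]

lemma p_dvd_pR : (p : ℤ_[p]) ∣ (p : ℤ_[p]) ^ (max r 1) :=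
  dvd_pow_self _ (by omega)

lemma pr_dvd_pR : (p : ℤ_[p]) ^ r ∣ (p : ℤ_[p]) ^ (max r 1) :=
  pow_dvd_pow _ (by omega)

lemma pR_dvd_pr_mul_p : (p : ℤ_[p]) ^ (max r 1) ∣ (p : ℤ_[p]) ^ r * p := by
  rw [← pow_succ]; exact pow_dvd_pow _ (by omega)

lemma mul_mem_aux {g h : (Matrix (Fin 3) (Fin 3) ℤ_[p])ˣ} (hg : g ∈ Ulevel p r)
    (hh : h ∈ Ulevel p r) : g * h ∈ Ulevel p r := by
  obtain ⟨hg1, hg2, hg3, hg4⟩ := hg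
  obtain ⟨hh1, hh2, hh3, hh4⟩ := hh
  refine ⟨?_, ?_, ?_, ?_⟩ <;> rw [mul_entry]
  · exact dvd_add (dvd_add (hg1.mul_right _) (hh1.mul_left _))
      ((p_dvd_pR.trans hh2).mul_left _)
  · exact dvd_add (dvd_add (hg2.mul_right _)
      (pR_dvd_pr_mul_p.trans (mul_dvd_mul hg3 hh1))) (hh2.mul_left _)
  · exact dvd_add (dvd_add ((pr_dvd_pR.trans hg2).mul_right _) (hg3.mul_right _))
      (hh3.mul_left _)
  · have key : (g : Matrix (Fin 3) (Fin 3) ℤ_[p]) 2 0 * (h : Matrix (Fin 3) (Fin 3) ℤ_[p]) 0 2 +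
        (g : Matrix (Fin 3) (Fin 3) ℤ_[p]) 2 1 * (h : Matrix (Fin 3) (Fin 3) ℤ_[p]) 1 2 +
        (g : Matrix (Fin 3) (Fin 3) ℤ_[p]) 2 2 * (h : Matrix (Fin 3) (Fin 3) ℤ_[p]) 2 2 - 1 =
        (g : Matrix (Fin 3) (Fin 3) ℤ_[p]) 2 0 * (h : Matrix (Fin 3) (Fin 3) ℤ_[p]) 0 2 +
        (g : Matrix (Fin 3) (Fin 3) ℤ_[p]) 2 1 * (h : Matrix (Fin 3) (Fin 3) ℤ_[p]) 1 2 +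
        (((g : Matrix (Fin 3) (Fin 3) ℤ_[p]) 2 2 - 1) * ((h : Matrix (Fin 3) (Fin 3) ℤ_[p]) 2 2 - 1) +
         ((g : Matrix (Fin 3) (Fin 3) ℤ_[p]) 2 2 - 1) + ((h : Matrix (Fin 3) (Fin 3) ℤ_[p]) 2 2 - 1)) := by
      ring
    rw [key]
    exact dvd_add (dvd_add ((pr_dvd_pR.trans hg2).mul_right _) (hg3.mul_right _))
      (dvd_add (dvd_add (hg4.mul_right _) hg4) hh4)

lemma not_isUnit_p : ¬ IsUnit (p : ℤ_[p]) := by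
  rw [PadicInt.isUnit_iff, PadicInt.norm_p]
  intro h
  have h2 : (1:ℝ) < p := by exact_mod_cast (Fact.out : p.Prime).one_lt
  rw [inv_eq_one] at h
  simp [h] at h2

lemma dvd_of_not_isUnit {x : ℤ_[p]} (hx : ¬ IsUnit x) : (p : ℤ_[p]) ∣ x := by
  rw [← PadicInt.norm_lt_one_iff_dvd]
  exact lt_of_le_of_ne (PadicInt.norm_le_one x) (fun h => hx (PadicInt.isUnit_iff.mpr h))

lemma isUnit_det (g : (Matrix (Fin 3) (Fin 3) ℤ_[p])ˣ) :
    IsUnit ((g : Matrix (Fin 3) (Fin 3) ℤ_[p]).det) :=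
  (Matrix.isUnit_iff_isUnit_det _).mp g.isUnit

lemma isUnit_00 {g : (Matrix (Fin 3) (Fin 3) ℤ_[p])ˣ}
    (h1 : (p : ℤ_[p]) ∣ (g : Matrix (Fin 3) (Fin 3) ℤ_[p]) 1 0)
    (h2 : (p : ℤ_[p]) ∣ (g : Matrix (Fin 3) (Fin 3) ℤ_[p]) 2 0) :
    IsUnit ((g : Matrix (Fin 3) (Fin 3) ℤ_[p]) 0 0) := by
  by_contra h0
  have h0' := dvd_of_not_isUnit h0
  have hdet : (p : ℤ_[p]) ∣ (g : Matrix (Fin 3) (Fin 3) ℤ_[p]).det := by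
    rw [Matrix.det_fin_three]
    set G := (g : Matrix (Fin 3) (Fin 3) ℤ_[p])
    have : G 0 0 * G 1 1 * G 2 2 - G 0 0 * G 1 2 * G 2 1 - G 0 1 * G 1 0 * G 2 2 +
        G 0 1 * G 1 2 * G 2 0 + G 0 2 * G 1 0 * G 2 1 - G 0 2 * G 1 1 * G 2 0 =
        G 0 0 * (G 1 1 * G 2 2 - G 1 2 * G 2 1) + G 1 0 * (G 0 2 * G 2 1 - G 0 1 * G 2 2) +
        G 2 0 * (G 0 1 * G 1 2 - G 0 2 * G 1 1) := by ring
    rw [this]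
    exact dvd_add (dvd_add (h0'.mul_right _) (h1.mul_right _)) (h2.mul_right _)
  exact not_isUnit_p (isUnit_of_dvd_unit hdet (isUnit_det g))

lemma inv_entry_eq (g : (Matrix (Fin 3) (Fin 3) ℤ_[p])ˣ) (i j : Fin 3) :
    (g : Matrix (Fin 3) (Fin 3) ℤ_[p]).det *
      ((g⁻¹ : (Matrix (Fin 3) (Fin 3) ℤ_[p])ˣ) : Matrix (Fin 3) (Fin 3) ℤ_[p]) i j =
    (g : Matrix (Fin 3) (Fin 3) ℤ_[p]).adjugate i j := by
  have hGH : (g : Matrix (Fin 3) (Fin 3) ℤ_[p]) *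
      ((g⁻¹ : (Matrix (Fin 3) (Fin 3) ℤ_[p])ˣ) : Matrix (Fin 3) (Fin 3) ℤ_[p]) = 1 := by
    rw [← Units.val_mul, mul_inv_cancel, Units.val_one]
  have h1 : (g : Matrix (Fin 3) (Fin 3) ℤ_[p]).adjugate *
      ((g : Matrix (Fin 3) (Fin 3) ℤ_[p]) *
        ((g⁻¹ : (Matrix (Fin 3) (Fin 3) ℤ_[p])ˣ) : Matrix (Fin 3) (Fin 3) ℤ_[p])) =
      (g : Matrix (Fin 3) (Fin 3) ℤ_[p]).adjugate := by rw [hGH, mul_one]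
  rw [← mul_assoc, Matrix.adjugate_mul, Matrix.smul_mul, Matrix.one_mul] at h1
  have := congrFun (congrFun h1 i) j
  rw [Matrix.smul_apply, smul_eq_mul] at this
  exact this

lemma inv_mem_aux {g : (Matrix (Fin 3) (Fin 3) ℤ_[p])ˣ} (hg : g ∈ Ulevel p r) :
    g⁻¹ ∈ Ulevel p r := by
  obtain ⟨h1, h2, h3, h4⟩ := hg
  set G := (g : Matrix (Fin 3) (Fin 3) ℤ_[p]) with hG
  set H := ((g⁻¹ : (Matrix (Fin 3) (Fin 3) ℤ_[p])ˣ) : Matrix (Fin 3) (Fin 3) ℤ_[p]) with hH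
  obtain ⟨u, hu⟩ := isUnit_det g
  have hinv : ∀ i j : Fin 3, H i j = (↑u⁻¹ : ℤ_[p]) * G.adjugate i j := by
    intro i j
    have h := inv_entry_eq g i j
    rw [← hu] at h
    rw [← one_mul (H i j), ← u.inv_mul, mul_assoc, h]
  have e10 : G.adjugate 1 0 = -(G 1 0 * G 2 2) + G 1 2 * G 2 0 := by
    rw [Matrix.adjugate_fin_three]; simp
  have e20 : G.adjugate 2 0 = G 1 0 * G 2 1 - G 1 1 * G 2 0 := by
    rw [Matrix.adjugate_fin_three]; simp
  have e21 : G.adjugate 2 1 = -(G 0 0 * G 2 1) + G 0 1 * G 2 0 := by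
    rw [Matrix.adjugate_fin_three]; simp
  have e22 : G.adjugate 2 2 = G 0 0 * G 1 1 - G 0 1 * G 1 0 := by
    rw [Matrix.adjugate_fin_three]; simp
  refine ⟨?_, ?_, ?_, ?_⟩
  · rw [← hH, hinv 1 0, e10]
    exact ((dvd_add (dvd_neg.mpr (h1.mul_right _)) ((p_dvd_pR.trans h2).mul_left _))).mul_left _
  · rw [← hH, hinv 2 0, e20]
    exact ((dvd_sub (pR_dvd_pr_mul_p.trans (by rw [mul_comm] at *; exact mul_dvd_mul h1 h3)) (h2.mul_left _))).mul_left _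
  · rw [← hH, hinv 2 1, e21]
    exact ((dvd_add (dvd_neg.mpr (h3.mul_left _)) ((pr_dvd_pR.trans h2).mul_left _))).mul_left _
  · rw [← hH]
    have key : H 2 2 - 1 = (↑u⁻¹ : ℤ_[p]) * (G.adjugate 2 2 - G.det) := by
      rw [mul_sub, ← hinv 2 2]
      have : (↑u⁻¹ : ℤ_[p]) * G.det = 1 := by
        rw [← hu, ← Units.val_mul, inv_mul_cancel, Units.val_one]
      rw [this]
    rw [key]
    refine Dvd.dvd.mul_left ?_ _
    rw [e22, Matrix.det_fin_three]
    have expand : G 0 0 * G 1 1 - G 0 1 * G 1 0 -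
        (G 0 0 * G 1 1 * G 2 2 - G 0 0 * G 1 2 * G 2 1 - G 0 1 * G 1 0 * G 2 2 +
         G 0 1 * G 1 2 * G 2 0 + G 0 2 * G 1 0 * G 2 1 - G 0 2 * G 1 1 * G 2 0) =
        (G 0 1 * G 1 0 - G 0 0 * G 1 1) * (G 2 2 - 1) +
        (G 0 0 * G 1 2 - G 0 2 * G 1 0) * G 2 1 +
        (G 0 2 * G 1 1 - G 0 1 * G 1 2) * G 2 0 := by ring
    rw [expand]
    exact dvd_add (dvd_add (h4.mul_left _) (h3.mul_left _)) ((pr_dvd_pR.trans h2).mul_left _)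

lemma one_mem_aux : (1 : (Matrix (Fin 3) (Fin 3) ℤ_[p])ˣ) ∈ Ulevel p r := by
  refine ⟨?_, ?_, ?_, ?_⟩ <;>
    simp [Ulevel, Units.val_one, Matrix.one_apply]

noncomputable def lowUnit (x y : ℤ_[p]) : (Matrix (Fin 3) (Fin 3) ℤ_[p])ˣ where
  val := !![1,0,0; x,1,0; y,0,1]
  inv := !![1,0,0; -x,1,0; -y,0,1]
  val_inv := by rw [Matrix.mul_fin_three, Matrix.one_fin_three]; ring_nf
  inv_val := by rw [Matrix.mul_fin_three, Matrix.one_fin_three]; ring_nf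

noncomputable def upUnit (b c : ℤ_[p]) : (Matrix (Fin 3) (Fin 3) ℤ_[p])ˣ where
  val := !![1,b,c; 0,1,0; 0,0,1]
  inv := !![1,-b,-c; 0,1,0; 0,0,1]
  val_inv := by rw [Matrix.mul_fin_three, Matrix.one_fin_three]; ring_nf
  inv_val := by rw [Matrix.mul_fin_three, Matrix.one_fin_three]; ring_nf

noncomputable def blockUnit (α : ℤ_[p]ˣ) (γ : (Matrix (Fin 2) (Fin 2) ℤ_[p])ˣ) :
    (Matrix (Fin 3) (Fin 3) ℤ_[p])ˣ where
  val := !![(α:ℤ_[p]),0,0; 0,(γ:Matrix (Fin 2) (Fin 2) ℤ_[p]) 0 0,(γ:Matrix (Fin 2) (Fin 2) ℤ_[p]) 0 1;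
            0,(γ:Matrix (Fin 2) (Fin 2) ℤ_[p]) 1 0,(γ:Matrix (Fin 2) (Fin 2) ℤ_[p]) 1 1]
  inv := !![((α⁻¹:ℤ_[p]ˣ):ℤ_[p]),0,0;
            0,((γ⁻¹:(Matrix (Fin 2) (Fin 2) ℤ_[p])ˣ):Matrix (Fin 2) (Fin 2) ℤ_[p]) 0 0,
              ((γ⁻¹:(Matrix (Fin 2) (Fin 2) ℤ_[p])ˣ):Matrix (Fin 2) (Fin 2) ℤ_[p]) 0 1;
            0,((γ⁻¹:(Matrix (Fin 2) (Fin 2) ℤ_[p])ˣ):Matrix (Fin 2) (Fin 2) ℤ_[p]) 1 0,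
              ((γ⁻¹:(Matrix (Fin 2) (Fin 2) ℤ_[p])ˣ):Matrix (Fin 2) (Fin 2) ℤ_[p]) 1 1]
  val_inv := by
    have h : (γ : Matrix (Fin 2) (Fin 2) ℤ_[p]) *
        ((γ⁻¹ : (Matrix (Fin 2) (Fin 2) ℤ_[p])ˣ) : Matrix (Fin 2) (Fin 2) ℤ_[p]) = 1 := by
      rw [← Units.val_mul, mul_inv_cancel, Units.val_one]
    have h00 := congrFun (congrFun h 0) 0
    have h01 := congrFun (congrFun h 0) 1
    have h10 := congrFun (congrFun h 1) 0
    have h11 := congrFun (congrFun h 1) 1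
    simp [Matrix.mul_apply, Fin.sum_univ_two, Matrix.one_apply] at h00 h01 h10 h11
    rw [Matrix.mul_fin_three, Matrix.one_fin_three]
    have hα : (α:ℤ_[p]) * ((α⁻¹:ℤ_[p]ˣ):ℤ_[p]) = 1 := by
      rw [← Units.val_mul, mul_inv_cancel, Units.val_one]
    simp only [Matrix.coe_units_inv, mul_zero, zero_mul, add_zero, zero_add, hα, h00, h01, h10, h11]
  inv_val := by
    have h : ((γ⁻¹ : (Matrix (Fin 2) (Fin 2) ℤ_[p])ˣ) : Matrix (Fin 2) (Fin 2) ℤ_[p]) *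
        (γ : Matrix (Fin 2) (Fin 2) ℤ_[p]) = 1 := by
      rw [← Units.val_mul, inv_mul_cancel, Units.val_one]
    have h00 := congrFun (congrFun h 0) 0
    have h01 := congrFun (congrFun h 0) 1
    have h10 := congrFun (congrFun h 1) 0
    have h11 := congrFun (congrFun h 1) 1
    simp [Matrix.mul_apply, Fin.sum_univ_two, Matrix.one_apply] at h00 h01 h10 h11
    rw [Matrix.mul_fin_three, Matrix.one_fin_three]
    have hα : ((α⁻¹:ℤ_[p]ˣ):ℤ_[p]) * (α:ℤ_[p]) = 1 := by
      rw [← Units.val_mul, inv_mul_cancel, Units.val_one]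
    simp only [Matrix.coe_units_inv, mul_zero, zero_mul, add_zero, zero_add, hα, h00, h01, h10, h11]

end IwAux


namespace IwAux
set_option maxHeartbeats 1000000 in
lemma iwahori {p : ℕ} [Fact p.Prime] {r : ℕ} (g : (Matrix (Fin 3) (Fin 3) ℤ_[p])ˣ)
    (hg : g ∈ Ulevel p r) :
    ∃! d : ℤ_[p] × ℤ_[p] × ℤ_[p]ˣ × (Matrix (Fin 2) (Fin 2) ℤ_[p])ˣ × ℤ_[p] × ℤ_[p],
      ((p : ℤ_[p]) ∣ d.1 ∧
       (p : ℤ_[p]) ^ (max r 1) ∣ d.2.1 ∧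
       (p : ℤ_[p]) ^ r ∣ (d.2.2.2.1 : Matrix (Fin 2) (Fin 2) ℤ_[p]) 1 0 ∧
       (p : ℤ_[p]) ^ r ∣ ((d.2.2.2.1 : Matrix (Fin 2) (Fin 2) ℤ_[p]) 1 1 - 1)) ∧
      (g : Matrix (Fin 3) (Fin 3) ℤ_[p]) =
        !![1, 0, 0; d.1, 1, 0; d.2.1, 0, 1] *
        !![(d.2.2.1 : ℤ_[p]), 0, 0;
           0, (d.2.2.2.1 : Matrix (Fin 2) (Fin 2) ℤ_[p]) 0 0,
              (d.2.2.2.1 : Matrix (Fin 2) (Fin 2) ℤ_[p]) 0 1;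
           0, (d.2.2.2.1 : Matrix (Fin 2) (Fin 2) ℤ_[p]) 1 0,
              (d.2.2.2.1 : Matrix (Fin 2) (Fin 2) ℤ_[p]) 1 1] *
        !![1, d.2.2.2.2.1, d.2.2.2.2.2; 0, 1, 0; 0, 0, 1] := by
  obtain ⟨h1, h2, h3, h4⟩ := hg
  set G := (g : Matrix (Fin 3) (Fin 3) ℤ_[p]) with hG
  have hu0 : IsUnit (G 0 0) := isUnit_00 h1 (p_dvd_pR.trans h2)
  set u := hu0.unit with hudef
  have hu : (u : ℤ_[p]) = G 0 0 := hu0.unit_spec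
  set v : ℤ_[p] := ((u⁻¹ : ℤ_[p]ˣ) : ℤ_[p]) with hv
  have k : G 0 0 * v = 1 := by rw [← hu, hv, ← Units.val_mul, mul_inv_cancel, Units.val_one]
  have M : G = !![1,0,0; G 1 0 * v,1,0; G 2 0 * v,0,1] *
      !![G 0 0,0,0; 0, G 1 1 - G 1 0 * v * G 0 1, G 1 2 - G 1 0 * v * G 0 2;
         0, G 2 1 - G 2 0 * v * G 0 1, G 2 2 - G 2 0 * v * G 0 2] *
      !![1, G 0 1 * v, G 0 2 * v; 0,1,0; 0,0,1] := by
    rw [Matrix.mul_fin_three, Matrix.mul_fin_three]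
    ext i j
    fin_cases i <;> fin_cases j <;> simp
    · linear_combination (-(G 0 1)) * k
    · linear_combination (-(G 0 2)) * k
    · linear_combination (-(G 1 0)) * k
    · linear_combination (-(G 1 0 * G 0 1 * v)) * k
    · linear_combination (-(G 1 0 * G 0 2 * v)) * k
    · linear_combination (-(G 2 0)) * k
    · linear_combination (-(G 2 0 * G 0 1 * v)) * k
    · linear_combination (-(G 2 0 * G 0 2 * v)) * k
  have hγ : IsUnit (!![G 1 1 - G 1 0 * v * G 0 1, G 1 2 - G 1 0 * v * G 0 2;
      G 2 1 - G 2 0 * v * G 0 1, G 2 2 - G 2 0 * v * G 0 2] : Matrix (Fin 2) (Fin 2) ℤ_[p]) := by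
    rw [Matrix.isUnit_iff_isUnit_det, Matrix.det_fin_two_of]
    have hdet := isUnit_det g
    rw [← hG] at hdet
    have key : G.det = G 0 0 * ((G 1 1 - G 1 0 * v * G 0 1) * (G 2 2 - G 2 0 * v * G 0 2) -
        (G 1 2 - G 1 0 * v * G 0 2) * (G 2 1 - G 2 0 * v * G 0 1)) := by
      conv_lhs => rw [M]
      rw [Matrix.mul_fin_three, Matrix.mul_fin_three, Matrix.det_fin_three]
      simp
      ring
    rw [key] at hdet
    exact isUnit_of_mul_isUnit_right hdet
  set γu := hγ.unit with hγdef
  have hγs : (γu : Matrix (Fin 2) (Fin 2) ℤ_[p]) =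
      !![G 1 1 - G 1 0 * v * G 0 1, G 1 2 - G 1 0 * v * G 0 2;
         G 2 1 - G 2 0 * v * G 0 1, G 2 2 - G 2 0 * v * G 0 2] := hγ.unit_spec
  refine ⟨⟨G 1 0 * v, G 2 0 * v, u, γu, G 0 1 * v, G 0 2 * v⟩, ⟨⟨?_, ?_, ?_, ?_⟩, ?_⟩, ?_⟩
  · exact h1.mul_right v
  · exact h2.mul_right v
  · rw [hγs]
    simp only [Fin.isValue, Matrix.of_apply, Matrix.cons_val', Matrix.cons_val_zero,
      Matrix.empty_val', Matrix.cons_val_fin_one, Matrix.cons_val_one, Matrix.head_fin_const,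
      Matrix.head_cons]
    exact dvd_sub h3 (((pr_dvd_pR.trans h2).mul_right _).mul_right _)
  · rw [hγs]
    simp only [Fin.isValue, Matrix.of_apply, Matrix.cons_val', Matrix.cons_val_zero,
      Matrix.empty_val', Matrix.cons_val_fin_one, Matrix.cons_val_one, Matrix.head_fin_const,
      Matrix.head_cons]
    have : G 2 2 - G 2 0 * v * G 0 2 - 1 = (G 2 2 - 1) - G 2 0 * v * G 0 2 := by ring
    rw [this]
    exact dvd_sub h4 (((pr_dvd_pR.trans h2).mul_right _).mul_right _)
  · rw [hu, hγs]
    simp only [Fin.isValue, Matrix.of_apply, Matrix.cons_val', Matrix.cons_val_zero,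
      Matrix.empty_val', Matrix.cons_val_fin_one, Matrix.cons_val_one, Matrix.head_fin_const,
      Matrix.head_cons]
    exact M
  · rintro ⟨x', y', α', γ', b', c'⟩ ⟨⟨hc1, hc2, hc3, hc4⟩, heq⟩
    rw [Matrix.mul_fin_three, Matrix.mul_fin_three] at heq
    have E : ∀ i j : Fin 3, G i j = _ := fun i j => congrFun (congrFun heq i) j
    have e00 := E 0 0; have e01 := E 0 1; have e02 := E 0 2
    have e10 := E 1 0; have e11 := E 1 1; have e12 := E 1 2
    have e20 := E 2 0; have e21 := E 2 1; have e22 := E 2 2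
    simp at e00 e01 e02 e10 e11 e12 e20 e21 e22
    have hx' : x' = G 1 0 * v := by
      linear_combination (-v) * e10 + (x' * v) * e00 + (-x') * k
    have hy' : y' = G 2 0 * v := by
      linear_combination (-v) * e20 + (y' * v) * e00 + (-y') * k
    have hb' : b' = G 0 1 * v := by
      linear_combination (-v) * e01 + (b' * v) * e00 + (-b') * k
    have hc' : c' = G 0 2 * v := by
      linear_combination (-v) * e02 + (c' * v) * e00 + (-c') * k
    have hα'u : α' = u := Units.ext (by rw [hu]; exact e00.symm)
    have hγ'u : γ' = γu := by
      apply Units.ext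
      rw [hγs]
      ext i j
      fin_cases i <;> fin_cases j <;> simp
      · linear_combination -e11 - ((α' : ℤ_[p]) * b') * hx' + (G 1 0 * v) * e01
      · linear_combination -e12 - ((α' : ℤ_[p]) * c') * hx' + (G 1 0 * v) * e02
      · linear_combination -e21 - ((α' : ℤ_[p]) * b') * hy' + (G 2 0 * v) * e01
      · linear_combination -e22 - ((α' : ℤ_[p]) * c') * hy' + (G 2 0 * v) * e02
    simp only [Prod.mk.injEq]
    exact ⟨hx', hy', hα'u, hγ'u, hb', hc'⟩
end IwAux


namespace IwAux
variable {p : ℕ} [Fact p.Prime] {r : ℕ}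

lemma lowUnit_mem {x y : ℤ_[p]} (hx : (p:ℤ_[p]) ∣ x) (hy : (p:ℤ_[p])^(max r 1) ∣ y) :
    lowUnit x y ∈ Ulevel p r := by
  refine ⟨?_, ?_, ?_, ?_⟩
  · simpa [lowUnit, Matrix.vecHead, Matrix.vecTail] using hx
  · simpa [lowUnit, Matrix.vecHead, Matrix.vecTail] using hy
  · simp [lowUnit, Matrix.vecHead, Matrix.vecTail]
  · simp [lowUnit, Matrix.vecHead, Matrix.vecTail]

lemma upUnit_mem (b c : ℤ_[p]) : upUnit b c ∈ Ulevel p r := by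
  refine ⟨?_, ?_, ?_, ?_⟩ <;> simp [upUnit, Matrix.vecHead, Matrix.vecTail]

lemma blockUnit_mem (α : ℤ_[p]ˣ) {γ : (Matrix (Fin 2) (Fin 2) ℤ_[p])ˣ}
    (h3 : (p:ℤ_[p])^r ∣ (γ : Matrix (Fin 2) (Fin 2) ℤ_[p]) 1 0)
    (h4 : (p:ℤ_[p])^r ∣ ((γ : Matrix (Fin 2) (Fin 2) ℤ_[p]) 1 1 - 1)) :
    blockUnit α γ ∈ Ulevel p r := by
  refine ⟨?_, ?_, ?_, ?_⟩
  · simp [blockUnit, Matrix.vecHead, Matrix.vecTail]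
  · simp [blockUnit, Matrix.vecHead, Matrix.vecTail]
  · simpa [blockUnit, Matrix.vecHead, Matrix.vecTail] using h3
  · simpa [blockUnit, Matrix.vecHead, Matrix.vecTail] using h4

lemma lowUnit_shape (x y : ℤ_[p]) :
    lowerShape p ((lowUnit x y : (Matrix (Fin 3) (Fin 3) ℤ_[p])ˣ) : Matrix (Fin 3) (Fin 3) ℤ_[p]) := by
  refine ⟨?_, ?_, ?_, ?_, ?_, ?_, ?_⟩ <;> simp [lowUnit, lowerShape, Matrix.vecHead, Matrix.vecTail]

lemma upUnit_shape (b c : ℤ_[p]) :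
    upperShape p ((upUnit b c : (Matrix (Fin 3) (Fin 3) ℤ_[p])ˣ) : Matrix (Fin 3) (Fin 3) ℤ_[p]) := by
  refine ⟨?_, ?_, ?_, ?_, ?_, ?_, ?_⟩ <;> simp [upUnit, upperShape, Matrix.vecHead, Matrix.vecTail]

lemma blockUnit_shape (α : ℤ_[p]ˣ) (γ : (Matrix (Fin 2) (Fin 2) ℤ_[p])ˣ) :
    leviShape p ((blockUnit α γ : (Matrix (Fin 3) (Fin 3) ℤ_[p])ˣ) : Matrix (Fin 3) (Fin 3) ℤ_[p]) := by
  refine ⟨?_, ?_, ?_, ?_⟩ <;> simp [blockUnit, leviShape, Matrix.vecHead, Matrix.vecTail]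

end IwAux

/-- **Iwahori decomposition of `U^{(P₁)}_{1,p}(p^r)` with respect to `P₁`.**
`U` is a subgroup of `GL₃(ℤ_p)`; every `g ∈ U` can be written uniquely as `g = n̄·m·n` where
`n̄ = [[1,0,0],[x,1,0],[y,0,1]]` with `x ∈ pℤ_p`, `y ∈ p^Rℤ_p`;
`m = [[α,0,0],[0,γ]]` with `α ∈ ℤ_p^×`, `γ ∈ GL₂(ℤ_p)`, `γ₂₁ ∈ p^rℤ_p`, `γ₂₂ ∈ 1 + p^rℤ_p`;
and `n = [[1,b,c],[0,1,0],[0,0,1]]` with `b, c ∈ ℤ_p`.  In particular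
`U = (U ∩ N̄)·(U ∩ M)·(U ∩ N)`, and the intersection of `U` with the `GL₂`-factor of the Levi
is the level-`p^r` mirabolic subgroup. -/
theorem stmt_4 (p : ℕ) [Fact p.Prime] (r : ℕ) :
    -- U is a subgroup of GL₃(ℤ_p)
    (∃ U : Subgroup ((Matrix (Fin 3) (Fin 3) ℤ_[p])ˣ),
        (U : Set ((Matrix (Fin 3) (Fin 3) ℤ_[p])ˣ)) = Ulevel p r) ∧
    -- unique Iwahori factorization g = n̄ · m · n
    (∀ g ∈ Ulevel p r,
      ∃! d : ℤ_[p] × ℤ_[p] × ℤ_[p]ˣ × (Matrix (Fin 2) (Fin 2) ℤ_[p])ˣ × ℤ_[p] × ℤ_[p],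
        ((p : ℤ_[p]) ∣ d.1 ∧
         (p : ℤ_[p]) ^ (max r 1) ∣ d.2.1 ∧
         (p : ℤ_[p]) ^ r ∣ (d.2.2.2.1 : Matrix (Fin 2) (Fin 2) ℤ_[p]) 1 0 ∧
         (p : ℤ_[p]) ^ r ∣ ((d.2.2.2.1 : Matrix (Fin 2) (Fin 2) ℤ_[p]) 1 1 - 1)) ∧
        (g : Matrix (Fin 3) (Fin 3) ℤ_[p]) =
          !![1, 0, 0; d.1, 1, 0; d.2.1, 0, 1] *
          !![(d.2.2.1 : ℤ_[p]), 0, 0;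
             0, (d.2.2.2.1 : Matrix (Fin 2) (Fin 2) ℤ_[p]) 0 0,
                (d.2.2.2.1 : Matrix (Fin 2) (Fin 2) ℤ_[p]) 0 1;
             0, (d.2.2.2.1 : Matrix (Fin 2) (Fin 2) ℤ_[p]) 1 0,
                (d.2.2.2.1 : Matrix (Fin 2) (Fin 2) ℤ_[p]) 1 1] *
          !![1, d.2.2.2.2.1, d.2.2.2.2.2; 0, 1, 0; 0, 0, 1]) ∧
    -- U = (U ∩ N̄)·(U ∩ M)·(U ∩ N)
    (∀ g : (Matrix (Fin 3) (Fin 3) ℤ_[p])ˣ,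
      g ∈ Ulevel p r ↔
        ∃ h₁ h₂ h₃ : (Matrix (Fin 3) (Fin 3) ℤ_[p])ˣ,
          h₁ ∈ Ulevel p r ∧ h₂ ∈ Ulevel p r ∧ h₃ ∈ Ulevel p r ∧
          lowerShape p (h₁ : Matrix (Fin 3) (Fin 3) ℤ_[p]) ∧
          leviShape p (h₂ : Matrix (Fin 3) (Fin 3) ℤ_[p]) ∧
          upperShape p (h₃ : Matrix (Fin 3) (Fin 3) ℤ_[p]) ∧
          g = h₁ * h₂ * h₃) ∧
    -- intersection with the GL₂-factor of the Levi is the mirabolic subgroup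
    (∀ γ : (Matrix (Fin 2) (Fin 2) ℤ_[p])ˣ,
      (∃ g ∈ Ulevel p r, (g : Matrix (Fin 3) (Fin 3) ℤ_[p]) =
          !![1, 0, 0;
             0, (γ : Matrix (Fin 2) (Fin 2) ℤ_[p]) 0 0, (γ : Matrix (Fin 2) (Fin 2) ℤ_[p]) 0 1;
             0, (γ : Matrix (Fin 2) (Fin 2) ℤ_[p]) 1 0, (γ : Matrix (Fin 2) (Fin 2) ℤ_[p]) 1 1]) ↔
        ((p : ℤ_[p]) ^ r ∣ (γ : Matrix (Fin 2) (Fin 2) ℤ_[p]) 1 0 ∧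
         (p : ℤ_[p]) ^ r ∣ ((γ : Matrix (Fin 2) (Fin 2) ℤ_[p]) 1 1 - 1))) := by
  refine ⟨?_, fun g hg => IwAux.iwahori g hg, ?_, ?_⟩
  · exact ⟨{ carrier := Ulevel p r,
             mul_mem' := fun ha hb => IwAux.mul_mem_aux ha hb,
             one_mem' := IwAux.one_mem_aux,
             inv_mem' := fun ha => IwAux.inv_mem_aux ha }, rfl⟩
  · intro g
    constructor
    · intro hg
      obtain ⟨⟨x, y, u, γ, b, c⟩, ⟨⟨hc1, hc2, hc3, hc4⟩, heq⟩, -⟩ := IwAux.iwahori g hg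
      refine ⟨IwAux.lowUnit x y, IwAux.blockUnit u γ, IwAux.upUnit b c,
        IwAux.lowUnit_mem hc1 hc2, IwAux.blockUnit_mem u hc3 hc4, IwAux.upUnit_mem b c,
        IwAux.lowUnit_shape x y, IwAux.blockUnit_shape u γ, IwAux.upUnit_shape b c, ?_⟩
      apply Units.ext
      rw [Units.val_mul, Units.val_mul]
      exact heq
    · rintro ⟨h₁, h₂, h₃, m1, m2, m3, -, -, -, rfl⟩
      exact IwAux.mul_mem_aux (IwAux.mul_mem_aux m1 m2) m3
  · intro γ
    constructor
    · rintro ⟨g, hgU, hmat⟩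
      obtain ⟨-, -, h3, h4⟩ := hgU
      have e21 := congrFun (congrFun hmat 2) 1
      have e22 := congrFun (congrFun hmat 2) 2
      simp at e21 e22
      exact ⟨e21 ▸ h3, e22 ▸ h4⟩
    · rintro ⟨hA, hB⟩
      refine ⟨IwAux.blockUnit 1 γ, IwAux.blockUnit_mem 1 hA hB, ?_⟩
      show (!![((1:ℤ_[p]ˣ):ℤ_[p]),0,0;
            0,(γ:Matrix (Fin 2) (Fin 2) ℤ_[p]) 0 0,(γ:Matrix (Fin 2) (Fin 2) ℤ_[p]) 0 1;
            0,(γ:Matrix (Fin 2) (Fin 2) ℤ_[p]) 1 0,(γ:Matrix (Fin 2) (Fin 2) ℤ_[p]) 1 1] :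
          Matrix (Fin 3) (Fin 3) ℤ_[p]) = _
      rw [Units.val_one]
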